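/- Let G be a group and n ≥ 1. Two elements of the wreath product Gₙ = G ≀ Sₙ are conjugate in Gₙ if and only if they have the same type, i.e. if and only if for every r ≥ 1 and every conjugacy class [c] of elements of G, the number m_r(c) of r-cycles of the underlying permutation whose cycle product lies in [c] is the same for both elements. -/

import Mathlib

open scoped BigOperators

/-- The action of permutations of `Fin n` on `Fin n → G` by `(s • g) i = g (s⁻¹ i)`,
as a homomorphism to the automorphism group. -/
def permAut (G : Type*) [Group G] (n : ℕ) : Equiv.Perm (Fin n) →* MulAut (Fin n → G) where
  toFun s :=
    { toFun := fun g => g ∘ s.symm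
      invFun := fun g => g ∘ s
      left_inv := fun g => by funext i; simp
      right_inv := fun g => by funext i; simp
      map_mul' := fun g h => rfl }
  map_one' := by ext g i; simp; rfl
  map_mul' s t := by ext g i; simp [Equiv.Perm.mul_def]

/-- The wreath product `G ≀ Sₙ`, the semidirect product of `Gⁿ` by the symmetric
group `Sₙ` permuting the factors. -/
abbrev WreathProduct (G : Type*) [Group G] (n : ℕ) :=
  (Fin n → G) ⋊[permAut G n] Equiv.Perm (Fin n)

/-- The action of the wreath product `G ≀ Sₙ` on `Xⁿ`:
`((g₁,…,gₙ),s)·(x₁,…,xₙ) = (g₁ x_{s⁻¹(1)},…,gₙ x_{s⁻¹(n)})`. -/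
instance wreathMulAction (G : Type*) [Group G] (X : Type*) [MulAction G X] (n : ℕ) :
    MulAction (WreathProduct G n) (Fin n → X) where
  smul a x := fun i => a.left i • x (a.right.symm i)
  one_smul x := by
    funext i
    show (1 : WreathProduct G n).left i • x ((1 : WreathProduct G n).right.symm i) = x i
    simp; rfl
  mul_smul a b x := by
    funext i
    show (a * b).left i • x ((a * b).right.symm i)
      = a.left i • (fun j => b.left j • x (b.right.symm j)) (a.right.symm i)
    simp [SemidirectProduct.mul_left, SemidirectProduct.mul_right, permAut, mul_smul,
      Equiv.Perm.mul_def]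

theorem wreath_smul_apply (G : Type*) [Group G] (X : Type*) [MulAction G X] (n : ℕ)
    (a : WreathProduct G n) (x : Fin n → X) (i : Fin n) :
    (a • x) i = a.left i • x (a.right.symm i) := rfl

open scoped Classical in
/-- The orbifold Euler characteristic of order `k` of a `G`-space `X`:
`χ⁽ᵏ⁾(X,G) = (1/|G|) Σ_{pairwise commuting (g₀,…,g_k)} |X^⟨g₀,…,g_k⟩|`. -/
noncomputable def orbChi (k : ℕ) (G : Type*) [Group G] (X : Type*) [MulAction G X] : ℚ :=
  (∑ᶠ g : Fin (k + 1) → G,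
      if ∀ i j, Commute (g i) (g j) then
        (Nat.card {x : X // ∀ i, g i • x = x} : ℚ)
      else 0) / (Nat.card G : ℚ)

/-- Generalized binomial coefficient `α choose j` for rational `α`. -/
noncomputable def qchoose (α : ℚ) (j : ℕ) : ℚ :=
  (∏ i ∈ Finset.range j, (α - i)) / (j.factorial : ℚ)

/-- The binomial series `(1 - t^m)^α ∈ ℚ⟦t⟧` for a rational exponent `α`:
its coefficient at `t^(m·j)` is `(-1)^j (α choose j)`. -/
noncomputable def onePowRat (m : ℕ) (α : ℚ) : PowerSeries ℚ :=
  PowerSeries.mk fun n => if m ∣ n then (-1 : ℚ) ^ (n / m) * qchoose α (n / m) else 0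

/-- The cycle product of the element `(g,s) ∈ G ≀ Sₙ` corresponding to the cycle
`(i, s(i), …, s^{r-1}(i))` of `s` through `i` (of length `r`, the minimal period of `i`),
computed with starting point `i`: `g_{s^{r-1}(i)} ⋯ g_{s(i)} g_i`. -/
noncomputable def cycleProd {G : Type*} [Group G] {n : ℕ} (g : Fin n → G) (s : Equiv.Perm (Fin n))
    (i : Fin n) : G :=
  (((List.range (Function.minimalPeriod (⇑s) i)).map fun j => g ((s ^ j) i)).reverse).prod

/-- `m_r(c)`, the number of `r`-cycles of `s` (fixed points counted as `1`-cycles) whose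
cycle product lies in the conjugacy class of `c`: each such cycle consists of exactly `r`
points `i` with minimal period `r` and cycle product (computed from the starting point `i`)
conjugate to `c`. -/
noncomputable def mCount {G : Type*} [Group G] {n : ℕ} (g : Fin n → G)
    (s : Equiv.Perm (Fin n)) (r : ℕ) (c : G) : ℕ :=
  Nat.card {i : Fin n // Function.minimalPeriod (⇑s) i = r ∧ IsConj (cycleProd g s i) c} / r

/-!
Conjugating `(g, s)` by `(h, t)` relabels the cycles of `s` through `t` and replaces each cycle
product by a conjugate (the factors of `h` telescope around the cycle), so the type is invariant.
Conversely, if the types agree, match the cycles of `s₁` and `s₂` preserving lengths and classes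
of cycle products. The matching gives `t` with `t s₁ t⁻¹ = s₂`; on each cycle, a conjugator `u`
with `u c₁ u⁻¹ = c₂` is propagated along the cycle to a function `ℓ` with
`ℓ (s₁ i) g₁ i = g₂ (t i) ℓ i`, and after one full turn it comes back to `u` exactly because
`u c₁ = c₂ u`.
-/

open Equiv Function

namespace Equiv.Perm

variable {α : Type*}

lemma minimalPeriod_apply_of_mul_eq {s₁ s₂ t : Perm α} (ht : t * s₁ = s₂ * t) (x : α) :
    minimalPeriod s₂ (t x) = minimalPeriod s₁ x := by
  have h₁ : Semiconj t s₁ s₂ := fun y => congr($ht y)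
  have h₂ : Semiconj t.symm s₂ s₁ := h₁.inverse_left t.left_inv t.right_inv
  refine Nat.dvd_antisymm ((isPeriodicPt_minimalPeriod s₁ x).map h₁).minimalPeriod_dvd ?_
  simpa using ((isPeriodicPt_minimalPeriod s₂ (t x)).map h₂).minimalPeriod_dvd

variable (s : Perm α)

lemma pow_minimalPeriod_apply (x : α) : (s ^ minimalPeriod s x) x = x := by
  rw [coe_pow, iterate_minimalPeriod]

lemma periodic_pow_apply (x : α) : Periodic (fun k => (s ^ k) x) (minimalPeriod s x) := by
  intro k
  simp only [pow_add, mul_apply, pow_minimalPeriod_apply]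

/-- Unlike in `cycleFactorsFinset`, fixed points count as cycles here. -/
abbrev Cycles := Quotient (SameCycle.setoid s)

lemma mk_pow_apply (k : ℕ) (x : α) :
    (⟦(s ^ k) x⟧ : s.Cycles) = ⟦x⟧ :=
  Quotient.sound (sameCycle_pow_left.mpr (SameCycle.refl s x))

variable [Finite α]

lemma minimalPeriod_pos (x : α) : 0 < minimalPeriod s x :=
  minimalPeriod_pos_of_mem_periodicPts (s.injective.mem_periodicPts x)

lemma minimalPeriod_self_apply (x : α) : minimalPeriod s (s x) = minimalPeriod s x :=
  minimalPeriod_apply (s.injective.mem_periodicPts x)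

lemma exists_pow_apply_out_eq (x : α) :
    ∃ k < minimalPeriod s (⟦x⟧ : s.Cycles).out, (s ^ k) (⟦x⟧ : s.Cycles).out = x := by
  obtain ⟨k, hk⟩ := (Quotient.mk_out (s := SameCycle.setoid s) x).exists_nat_pow_eq
  exact ⟨_, Nat.mod_lt _ (minimalPeriod_pos s _),
    ((periodic_pow_apply s _).map_mod_nat k).trans hk⟩

noncomputable def cycleDecomp : (Σ c : s.Cycles, Fin (minimalPeriod s c.out)) ≃ α :=
  Equiv.ofBijective (fun x => (s ^ (x.2 : ℕ)) x.1.out) <| by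
    refine ⟨?_, fun x => ?_⟩
    · rintro ⟨c, k⟩ ⟨d, l⟩ h
      obtain rfl : c = d := by
        simpa [mk_pow_apply] using congrArg (fun y => (⟦y⟧ : s.Cycles)) h
      simp only [coe_pow] at h
      rw [Sigma.mk.injEq, heq_iff_eq, Fin.ext_iff]
      exact ⟨rfl, iterate_injOn_Iio_minimalPeriod k.2 l.2 h⟩
    · obtain ⟨k, hk, hx⟩ := exists_pow_apply_out_eq s x
      exact ⟨⟨⟦x⟧, k, hk⟩, hx⟩

lemma cycleDecomp_apply (x : Σ c : s.Cycles, Fin (minimalPeriod s c.out)) :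
    s.cycleDecomp x = (s ^ (x.2 : ℕ)) x.1.out := rfl

lemma exists_apply_pow_apply_out_eq {β : Type*} (F : s.Cycles → ℕ → β)
    (hF : ∀ c, Periodic (F c) (minimalPeriod s c.out)) :
    ∃ f : α → β, ∀ c k, f ((s ^ k) c.out) = F c k := by
  refine ⟨fun x => F (s.cycleDecomp.symm x).1 (s.cycleDecomp.symm x).2, fun c k => ?_⟩
  have hk := Nat.mod_lt k (minimalPeriod_pos s c.out)
  have : (s ^ k) c.out = s.cycleDecomp ⟨c, k % minimalPeriod s c.out, hk⟩ :=
    ((periodic_pow_apply s c.out).map_mod_nat k).symm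
  beta_reduce
  rw [this, symm_apply_apply]
  exact (hF c).map_mod_nat k

lemma card_subtype_eq_mul_card_cycles {P : α → Prop} (hP : ∀ x, P (s x) ↔ P x) {r : ℕ}
    (hr : ∀ x, P x → minimalPeriod s x = r) :
    Nat.card {x // P x} = r * Nat.card {c : s.Cycles // P c.out} := by
  have hPpow : ∀ k x, P ((s ^ k) x) ↔ P x := by
    intro k x
    induction k with
    | zero => rfl
    | succ k ih => rw [pow_succ', mul_apply, hP, ih]
  let e : {x // P x} ≃ {c : s.Cycles // P c.out} × Fin r :=
    calc {x // P x}
      _ ≃ {y : Σ c : s.Cycles, Fin (minimalPeriod s c.out) // P y.1.out} :=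
        (s.cycleDecomp.subtypeEquiv fun y => (hPpow _ _).symm).symm
      _ ≃ Σ c : {c : s.Cycles // P c.out}, Fin (minimalPeriod s c.1.out) :=
        subtypeSigmaEquiv (fun c : s.Cycles => Fin (minimalPeriod s c.out)) (fun c => P c.out)
      _ ≃ Σ _ : {c : s.Cycles // P c.out}, Fin r :=
        Equiv.sigmaCongrRight fun c => finCongr (hr _ c.2)
      _ ≃ {c : s.Cycles // P c.out} × Fin r := sigmaEquivProd _ _
  rw [Nat.card_congr e, Nat.card_prod, Nat.card_fin, mul_comm]

lemma exists_mul_eq_mul_of_cycles_equiv {s₁ s₂ : Perm α} (e : s₁.Cycles ≃ s₂.Cycles)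
    (he : ∀ c, minimalPeriod s₂ (e c).out = minimalPeriod s₁ c.out) :
    ∃ t : Perm α, t * s₁ = s₂ * t ∧ ∀ c k, t ((s₁ ^ k) c.out) = (s₂ ^ k) (e c).out := by
  obtain ⟨f, hf⟩ := s₁.exists_apply_pow_apply_out_eq (fun c k => (s₂ ^ k) (e c).out) fun c => by
    rw [← he c]
    exact s₂.periodic_pow_apply _
  obtain ⟨f', hf'⟩ := s₂.exists_apply_pow_apply_out_eq (fun d k => (s₁ ^ k) (e.symm d).out)
    fun d => by
      rw [← e.apply_symm_apply d, he, e.symm_apply_apply]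
      exact s₁.periodic_pow_apply _
  have hf'f : LeftInverse f' f := fun x => by
    obtain ⟨⟨c, k⟩, rfl⟩ := s₁.cycleDecomp.surjective x
    rw [cycleDecomp_apply, hf, hf', symm_apply_apply]
  have hff' : RightInverse f' f := fun y => by
    obtain ⟨⟨d, k⟩, rfl⟩ := s₂.cycleDecomp.surjective y
    rw [cycleDecomp_apply, hf', hf, apply_symm_apply]
  refine ⟨⟨f, f', hf'f, hff'⟩, Equiv.ext fun x => ?_, hf⟩
  obtain ⟨⟨c, k⟩, rfl⟩ := s₁.cycleDecomp.surjective x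
  change f (s₁ ((s₁ ^ (k : ℕ)) c.out)) = s₂ (f ((s₁ ^ (k : ℕ)) c.out))
  rw [← mul_apply, ← pow_succ', hf, hf, pow_succ', mul_apply]

end Equiv.Perm

namespace WreathProduct

variable {G : Type*} [Group G] {n : ℕ}

lemma isConj_iff_exists_intertwine (a b : WreathProduct G n) :
    IsConj a b ↔ ∃ (t : Perm (Fin n)) (ℓ : Fin n → G), t * a.right = b.right * t ∧
      ∀ i, ℓ (a.right i) * a.left i = b.left (t i) * ℓ i := by
  have hleft (x y : WreathProduct G n) (j : Fin n) :
      (x * y).left j = x.left j * y.left (x.right⁻¹ j) := rfl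
  rw [isConj_iff]
  simp only [mul_inv_eq_iff_eq_mul, SemidirectProduct.ext_iff, funext_iff, hleft,
    SemidirectProduct.mul_right]
  constructor
  · rintro ⟨⟨h, t⟩, hl, hr⟩
    dsimp only at hl hr
    refine ⟨t, fun i => h (t (a.right⁻¹ i)), hr, fun i => ?_⟩
    dsimp only
    have hinv : b.right⁻¹ * t = t * a.right⁻¹ := by
      rw [inv_mul_eq_iff_eq_mul, ← mul_assoc, ← hr, mul_inv_cancel_right]
    have e : b.right.symm (t i) = t (a.right.symm i) := congr($hinv i)
    simpa only [Perm.coe_inv, e, symm_apply_apply] using hl (t i)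
  · rintro ⟨t, ℓ, ht, hℓ⟩
    refine ⟨⟨fun j => ℓ (a.right (t⁻¹ j)), t⟩, fun j => ?_, ht⟩
    dsimp only
    have hinv : t⁻¹ * b.right⁻¹ = a.right⁻¹ * t⁻¹ := by
      rw [← mul_inv_rev, ← mul_inv_rev, ht]
    have e : t.symm (b.right.symm j) = a.right.symm (t.symm j) := congr($hinv j)
    simpa only [Perm.coe_inv, e, apply_symm_apply] using hℓ (t⁻¹ j)

def pathProd (g : Fin n → G) (s : Perm (Fin n)) (k : ℕ) (i : Fin n) : G :=
  (((List.range k).map fun j => g ((s ^ j) i)).reverse).prod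

lemma cycleProd_eq_pathProd (g : Fin n → G) (s : Perm (Fin n)) (i : Fin n) :
    cycleProd g s i = pathProd g s (minimalPeriod s i) i := rfl

lemma pathProd_zero (g : Fin n → G) (s : Perm (Fin n)) (i : Fin n) : pathProd g s 0 i = 1 := rfl

lemma pathProd_succ (g : Fin n → G) (s : Perm (Fin n)) (k : ℕ) (i : Fin n) :
    pathProd g s (k + 1) i = g ((s ^ k) i) * pathProd g s k i := by
  simp [pathProd, List.range_succ]

lemma pathProd_add_minimalPeriod (g : Fin n → G) (s : Perm (Fin n)) (k : ℕ) (i : Fin n) :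
    pathProd g s (k + minimalPeriod s i) i = pathProd g s k i * cycleProd g s i := by
  induction k with
  | zero => rw [zero_add, pathProd_zero, one_mul, cycleProd_eq_pathProd]
  | succ k ih =>
    rw [add_right_comm, pathProd_succ, ih, pathProd_succ, mul_assoc, pow_add, Perm.mul_apply,
      Perm.pow_minimalPeriod_apply]

section Intertwine

variable {g₁ g₂ : Fin n → G} {s₁ s₂ t : Perm (Fin n)} {ℓ : Fin n → G}

lemma pathProd_intertwine (ht : t * s₁ = s₂ * t) (hℓ : ∀ i, ℓ (s₁ i) * g₁ i = g₂ (t i) * ℓ i)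
    (k : ℕ) (i : Fin n) :
    ℓ ((s₁ ^ k) i) * pathProd g₁ s₁ k i = pathProd g₂ s₂ k (t i) * ℓ i := by
  induction k with
  | zero => simp [pathProd_zero]
  | succ k ih =>
    have htk : t ((s₁ ^ k) i) = (s₂ ^ k) (t i) := congr($(SemiconjBy.pow_right ht k) i)
    rw [pathProd_succ, pathProd_succ, pow_succ', Perm.mul_apply, ← mul_assoc, hℓ, ← htk,
      mul_assoc, ih, mul_assoc]

lemma isConj_cycleProd_of_intertwine (ht : t * s₁ = s₂ * t)
    (hℓ : ∀ i, ℓ (s₁ i) * g₁ i = g₂ (t i) * ℓ i) (i : Fin n) :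
    IsConj (cycleProd g₁ s₁ i) (cycleProd g₂ s₂ (t i)) := by
  refine ⟨toUnits (ℓ i), ?_⟩
  have := pathProd_intertwine ht hℓ (minimalPeriod s₁ i) i
  rwa [Perm.pow_minimalPeriod_apply, ← cycleProd_eq_pathProd,
    ← Perm.minimalPeriod_apply_of_mul_eq ht, ← cycleProd_eq_pathProd] at this

lemma mCount_eq_of_intertwine (ht : t * s₁ = s₂ * t)
    (hℓ : ∀ i, ℓ (s₁ i) * g₁ i = g₂ (t i) * ℓ i) (r : ℕ) (c : G) :
    mCount g₁ s₁ r c = mCount g₂ s₂ r c := by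
  refine congrArg (· / r) (Nat.card_congr (t.subtypeEquiv fun i => ?_))
  have hi := isConj_cycleProd_of_intertwine ht hℓ i
  rw [Perm.minimalPeriod_apply_of_mul_eq ht]
  exact and_congr_right fun _ => ⟨hi.symm.trans, hi.trans⟩

end Intertwine

lemma isConj_cycleProd_self_apply (g : Fin n → G) (s : Perm (Fin n)) (i : Fin n) :
    IsConj (cycleProd g s i) (cycleProd g s (s i)) :=
  isConj_cycleProd_of_intertwine (ℓ := g) rfl (fun _ => rfl) i

/-- The type of `(g, s)` is the multiset of these values over the cycles of `s`. -/
noncomputable def cycleData (g : Fin n → G) (s : Perm (Fin n)) (c : s.Cycles) :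
    ℕ × ConjClasses G :=
  (minimalPeriod s c.out, ConjClasses.mk (cycleProd g s c.out))

lemma card_cycleData_fiber (g : Fin n → G) (s : Perm (Fin n)) (r : ℕ) (c : G) :
    Nat.card {x // cycleData g s x = (r, ConjClasses.mk c)} = mCount g s r c := by
  rcases r.eq_zero_or_pos with rfl | hr
  · have : IsEmpty {x // cycleData g s x = (0, ConjClasses.mk c)} :=
      ⟨fun x => (s.minimalPeriod_pos _).ne' (congrArg Prod.fst x.2)⟩
    rw [Nat.card_of_isEmpty, mCount, Nat.div_zero]
  · have hP (i : Fin n) : (minimalPeriod s (s i) = r ∧ IsConj (cycleProd g s (s i)) c) ↔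
        (minimalPeriod s i = r ∧ IsConj (cycleProd g s i) c) := by
      have hi := isConj_cycleProd_self_apply g s i
      rw [s.minimalPeriod_self_apply]
      exact and_congr_right fun _ => ⟨hi.trans, hi.symm.trans⟩
    rw [mCount, s.card_subtype_eq_mul_card_cycles hP fun _ h => h.1, Nat.mul_div_cancel_left _ hr]
    refine Nat.card_congr (Equiv.subtypeEquivRight fun x => ?_)
    rw [cycleData, Prod.mk.injEq, ConjClasses.mk_eq_mk_iff_isConj]

lemma exists_cycles_equiv_of_mCount_eq {g₁ g₂ : Fin n → G} {s₁ s₂ : Perm (Fin n)}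
    (H : ∀ r, 1 ≤ r → ∀ c, mCount g₁ s₁ r c = mCount g₂ s₂ r c) :
    ∃ e : s₁.Cycles ≃ s₂.Cycles, ∀ x, cycleData g₂ s₂ (e x) = cycleData g₁ s₁ x := by
  have hfiber (v : ℕ × ConjClasses G) :
      Nat.card {x // cycleData g₁ s₁ x = v} = Nat.card {y // cycleData g₂ s₂ y = v} := by
    obtain ⟨r, C⟩ := v
    obtain ⟨c, rfl⟩ := ConjClasses.mk_surjective C
    rw [card_cycleData_fiber, card_cycleData_fiber]
    rcases r.eq_zero_or_pos with rfl | hr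
    · simp only [mCount, Nat.div_zero]
    · exact H r hr c
  exact ⟨.ofFiberEquiv fun v => (Finite.card_eq.mp (hfiber v)).some, Equiv.ofFiberEquiv_map _⟩

lemma isConj_of_cycles_equiv {g₁ g₂ : Fin n → G} {s₁ s₂ : Perm (Fin n)}
    (e : s₁.Cycles ≃ s₂.Cycles) (he : ∀ x, cycleData g₂ s₂ (e x) = cycleData g₁ s₁ x) :
    IsConj (⟨g₁, s₁⟩ : WreathProduct G n) ⟨g₂, s₂⟩ := by
  have hp (x : s₁.Cycles) : minimalPeriod s₂ (e x).out = minimalPeriod s₁ x.out :=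
    congrArg Prod.fst (he x)
  have hc (x : s₁.Cycles) : IsConj (cycleProd g₁ s₁ x.out) (cycleProd g₂ s₂ (e x).out) :=
    ConjClasses.mk_eq_mk_iff_isConj.mp (congrArg Prod.snd (he x)).symm
  choose u hu using hc
  obtain ⟨t, ht, hte⟩ := Perm.exists_mul_eq_mul_of_cycles_equiv e hp
  -- `ℓ` propagates `u x` along the cycle of `x`; it is periodic because `u x` conjugates
  -- one cycle product into the other
  obtain ⟨ℓ, hℓ⟩ := s₁.exists_apply_pow_apply_out_eq
    (fun x k => pathProd g₂ s₂ k (e x).out * u x * (pathProd g₁ s₁ k x.out)⁻¹) fun x k => by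
      dsimp only
      rw [pathProd_add_minimalPeriod, ← hp, pathProd_add_minimalPeriod, mul_inv_rev,
        mul_assoc (pathProd _ _ _ _), ← (hu x).eq]
      group
  refine (isConj_iff_exists_intertwine _ _).mpr ⟨t, ℓ, ht, fun i => ?_⟩
  obtain ⟨⟨x, k⟩, rfl⟩ := s₁.cycleDecomp.surjective i
  dsimp only
  rw [Perm.cycleDecomp_apply, ← Perm.mul_apply, ← pow_succ', hℓ, hℓ, hte, pathProd_succ,
    pathProd_succ]
  group

end WreathProduct

open WreathProduct in
theorem wreath_isConj_iff_same_type_general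
    (G : Type*) [Group G] (n : ℕ) (a b : WreathProduct G n) :
    IsConj a b ↔ ∀ (r : ℕ), 1 ≤ r → ∀ c : G,
      mCount a.left a.right r c = mCount b.left b.right r c := by
  constructor
  · intro h r _ c
    obtain ⟨t, ℓ, ht, hℓ⟩ := (isConj_iff_exists_intertwine a b).mp h
    exact mCount_eq_of_intertwine ht hℓ r c
  · intro h
    obtain ⟨e, he⟩ := exists_cycles_equiv_of_mCount_eq h
    exact isConj_of_cycles_equiv e he

/-- **Conjugacy classes in wreath products.** Two elements of `Gₙ = G ≀ Sₙ` are conjugate if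
and only if they have the same type, i.e. iff for every `r ≥ 1` and every conjugacy class
`[c]` of elements of `G` the numbers `m_r(c)` of `r`-cycles of the underlying permutations
whose cycle products lie in `[c]` coincide. -/
theorem wreath_isConj_iff_same_type
    (G : Type*) [Group G] (n : ℕ) (hn : 1 ≤ n) (a b : WreathProduct G n) :
    IsConj a b ↔ ∀ (r : ℕ), 1 ≤ r → ∀ c : G,
      mCount a.left a.right r c = mCount b.left b.right r c :=
  wreath_isConj_iff_same_type_general G n a b
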